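/- For integers a, b, k with k ≥ b > a ≥ 1 and m ≥ 1: Σ_{λ ∈ BD'_{a,b,k}(m)} u^{ℓ_a(λ)} v^{ℓ_b(λ)} q^{|λ|} = Σ_{h=0}^{m} u^{h} v^{m−h} q^{k·C(m,2) + k·C(h,2) + mb + (a−b)h} [m choose h]_k. -/

import Mathlib

/-- The finite q-Pochhammer symbol `(t;q)_n = ∏_{i=0}^{n-1} (1 - t qⁱ)`. -/
noncomputable def qPoch (t q : ℂ) (n : ℕ) : ℂ := ∏ i ∈ Finset.range n, (1 - t * q ^ i)

/-- The infinite q-Pochhammer symbol `(t;q)_∞ = ∏_{i≥0} (1 - t qⁱ)`. -/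
noncomputable def qPochInf (t q : ℂ) : ℂ := ∏' i : ℕ, (1 - t * q ^ i)

/-- The Gaussian binomial coefficient `[A choose B]` in base `q`:
`(q;q)_A / ((q;q)_B (q;q)_{A-B})` for `A ≥ B ≥ 0`, and `0` otherwise. -/
noncomputable def gbinom (q : ℂ) (A B : ℕ) : ℂ :=
  if B ≤ A then qPoch q q A / (qPoch q q B * qPoch q q (A - B)) else 0

/-- `lcount k c l` is the number of parts of `l` congruent to `c` modulo `k`. -/
def lcount (k c : ℕ) (l : List ℕ) : ℕ := (l.filter (fun x => x % k = c % k)).length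

/-- Membership in `BD'_{a,b,k}(m)`: partitions `(λ_1,…,λ_m)` with exactly `m` parts, each
`≡ a` or `b (mod k)`, `λ_m ∈ {a, b}`, and for consecutive parts:
`λ_i - λ_{i+1} ≥ k` with strict inequality if `λ_i ≡ a (mod k)`, and
`λ_i - λ_{i+1} ≤ 2k` with strict inequality if `λ_{i+1} ≡ b (mod k)`. -/
def memBD' (a b k m : ℕ) (l : List ℕ) : Prop :=
  l.Pairwise (· ≥ ·) ∧ l.length = m ∧
    (∀ x ∈ l, 0 < x ∧ (x % k = a % k ∨ x % k = b % k)) ∧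
    (l.getLast? = some a ∨ l.getLast? = some b) ∧
    l.Chain' (fun x y => (y + k ≤ x ∧ (x % k = a % k → y + k < x)) ∧
      (x ≤ y + 2 * k ∧ (y % k = b % k → x < y + 2 * k)))

/-!
Reading a partition in `BD'_{a,b,k}(m)` from its smallest part upwards, each gap is forced by
the residues of the two parts involved: it equals `s + r' - r`, where `r, r' ∈ {a, b}` are the
residues of the lower and upper part and the shift `s` is `2k` if the upper part is `≡ a` and
`k` otherwise. Hence the partition is determined by the set `S ⊆ {0, …, m-1}` of positions
(counted from the bottom) of its parts `≡ a`, every `S` occurs, and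
`|λ| = a|S| + b(m - |S|) + k C(m,2) + k Σ_{j ∈ S, j ≠ 0} (m - j)`.
The reflection `j ↦ m - j` of `{1, …, m-1}` turns the last sum into `Σ_{j ∈ S} j`, and
`Σ_{|S| = h} Q^{Σ S} = Q^{C(h,2)} [m choose h]_Q` follows from the `q`-Pascal rule.
-/

open Finset

section GaussianBinomial

variable {Q : ℂ}

lemma qPoch_zero (t q : ℂ) : qPoch t q 0 = 1 := rfl

lemma qPoch_succ (t q : ℂ) (n : ℕ) : qPoch t q (n + 1) = qPoch t q n * (1 - t * q ^ n) :=
  prod_range_succ _ _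

lemma one_sub_mul_pow_ne_zero (hQ : ¬ IsOfFinOrder Q) (n : ℕ) : 1 - Q * Q ^ n ≠ 0 :=
  fun h => hQ <| isOfFinOrder_iff_pow_eq_one.2
    ⟨n + 1, n.succ_pos, by rw [pow_succ']; exact (sub_eq_zero.1 h).symm⟩

lemma qPoch_ne_zero (hQ : ¬ IsOfFinOrder Q) (n : ℕ) : qPoch Q Q n ≠ 0 :=
  prod_ne_zero_iff.2 fun i _ => one_sub_mul_pow_ne_zero hQ i

lemma gbinom_zero_right (hQ : ¬ IsOfFinOrder Q) (n : ℕ) : gbinom Q n 0 = 1 := by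
  simp [gbinom, qPoch_zero, qPoch_ne_zero hQ]

lemma gbinom_self (hQ : ¬ IsOfFinOrder Q) (n : ℕ) : gbinom Q n n = 1 := by
  simp [gbinom, qPoch_zero, qPoch_ne_zero hQ]

lemma gbinom_of_lt {n h : ℕ} (hnh : n < h) : gbinom Q n h = 0 :=
  if_neg hnh.not_ge

lemma gbinom_succ_succ (hQ : ¬ IsOfFinOrder Q) (n h : ℕ) :
    gbinom Q (n + 1) (h + 1) = gbinom Q n (h + 1) + Q ^ (n - h) * gbinom Q n h := by
  rcases lt_trichotomy h n with hlt | rfl | hgt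
  · obtain ⟨r, rfl⟩ := Nat.exists_eq_add_of_lt hlt
    simp only [gbinom, if_pos (by omega : h + 1 ≤ h + r + 1 + 1),
      if_pos (by omega : h + 1 ≤ h + r + 1), if_pos (by omega : h ≤ h + r + 1),
      show h + r + 1 + 1 - (h + 1) = r + 1 by omega, show h + r + 1 - (h + 1) = r by omega,
      show h + r + 1 - h = r + 1 by omega, qPoch_succ]
    have := qPoch_ne_zero hQ h
    have := qPoch_ne_zero hQ r
    have := one_sub_mul_pow_ne_zero hQ h
    have := one_sub_mul_pow_ne_zero hQ r
    field_simp
    ring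
  · simp [gbinom_self hQ, gbinom_of_lt (Nat.lt_succ_self h)]
  · simp [gbinom_of_lt hgt, gbinom_of_lt (Nat.succ_lt_succ hgt),
      gbinom_of_lt (hgt.trans (Nat.lt_succ_self h))]

lemma sum_powersetCard_insert {α M : Type*} [DecidableEq α] [AddCommMonoid M] {x : α}
    {s : Finset α} (hx : x ∉ s) (n : ℕ) (f : Finset α → M) :
    ∑ S ∈ powersetCard (n + 1) (insert x s), f S
      = ∑ S ∈ powersetCard (n + 1) s, f S + ∑ S ∈ powersetCard n s, f (insert x S) := by
  rw [powersetCard_succ_insert hx, sum_union, sum_image]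
  · intro S hS T hT hST
    have hxS : x ∉ S := fun h => hx (mem_powersetCard.1 hS |>.1 h)
    have hxT : x ∉ T := fun h => hx (mem_powersetCard.1 hT |>.1 h)
    simpa [erase_insert hxS, erase_insert hxT] using congrArg (erase · x) hST
  · refine disjoint_left.2 fun S hS hS' => ?_
    obtain ⟨T, -, rfl⟩ := mem_image.1 hS'
    exact hx (mem_powersetCard.1 hS |>.1 (mem_insert_self x T))

lemma sum_powersetCard_range_pow_sum (hQ : ¬ IsOfFinOrder Q) (m h : ℕ) :
    ∑ S ∈ powersetCard h (range m), Q ^ (∑ x ∈ S, x) = Q ^ h.choose 2 * gbinom Q m h := by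
  induction m generalizing h with
  | zero =>
    cases h with
    | zero => simp [gbinom_self hQ]
    | succ h => simp [powersetCard_eq_empty.2 (card_empty.trans_lt h.succ_pos), gbinom_of_lt]
  | succ m ih =>
    cases h with
    | zero => simp [gbinom_zero_right hQ]
    | succ h =>
      have hins : ∀ S ∈ powersetCard h (range m),
          Q ^ (∑ x ∈ insert m S, x) = Q ^ m * Q ^ (∑ x ∈ S, x) := fun S hS => by
        rw [sum_insert fun hm => notMem_range_self (mem_powersetCard.1 hS |>.1 hm), pow_add]
      rw [range_add_one, sum_powersetCard_insert notMem_range_self, ih, sum_congr rfl hins,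
        ← mul_sum, ih, gbinom_succ_succ hQ, Nat.choose_succ_succ', Nat.choose_one_right]
      rcases le_or_gt h m with hhm | hmh
      · obtain ⟨d, rfl⟩ := Nat.exists_eq_add_of_le hhm
        rw [Nat.add_sub_cancel_left, pow_add]
        ring
      · simp [gbinom_of_lt hmh]

/-- Extended by the identity outside `{1, …, m - 1}`, so that it is an involution of `ℕ`. -/
def reflect (m j : ℕ) : ℕ := if j = 0 ∨ m ≤ j then j else m - j

lemma reflect_involutive (m : ℕ) : Function.Involutive (reflect m) := by
  intro j
  unfold reflect
  split_ifs <;> omega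

lemma map_range_reflect (m : ℕ) :
    (range m).map (reflect_involutive m).toPerm.toEmbedding = range m :=
  map_eq_of_subset fun j hj => by
    obtain ⟨i, hi, rfl⟩ := mem_map.1 hj
    simp only [mem_range, Equiv.coe_toEmbedding, Function.Involutive.coe_toPerm] at hi ⊢
    unfold reflect
    split_ifs <;> omega

lemma sum_powersetCard_range_pow_sum_reflect (hQ : ¬ IsOfFinOrder Q) (m h : ℕ) :
    ∑ S ∈ powersetCard h (range m), Q ^ (∑ j ∈ S, reflect m j)
      = Q ^ h.choose 2 * gbinom Q m h := by
  rw [← sum_powersetCard_range_pow_sum hQ]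
  conv_rhs => rw [← map_range_reflect, powersetCard_map, sum_map]
  simp

end GaussianBinomial

section Construction

variable (a b k : ℕ)

/-- The part at position `ι`, counted from the bottom, of the partition whose parts `≡ a` sit
at the positions in `S`. -/
def bdPart (S : Finset ℕ) (ι : ℕ) : ℕ :=
  (if ι ∈ S then a else b) + k * ι + k * #(S ∩ Ioc 0 ι)

def bdList (m : ℕ) (S : Finset ℕ) : List ℕ :=
  ((List.range m).map (bdPart a b k S)).reverse

def BDStep (x y : ℕ) : Prop :=
  (y + k ≤ x ∧ (x % k = a % k → y + k < x)) ∧ (x ≤ y + 2 * k ∧ (y % k = b % k → x < y + 2 * k))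

variable {a b k}

lemma bdPart_mod (S : Finset ℕ) (ι : ℕ) :
    bdPart a b k S ι % k = (if ι ∈ S then a else b) % k := by
  simp [bdPart, Nat.add_mul_mod_self_left]

lemma bdPart_zero (S : Finset ℕ) : bdPart a b k S 0 = if 0 ∈ S then a else b := by
  simp [bdPart]

lemma bdPart_succ (S : Finset ℕ) (ι : ℕ) :
    bdPart a b k S (ι + 1) + (if ι ∈ S then a else b)
      = bdPart a b k S ι + k + (if ι + 1 ∈ S then k + a else b) := by
  have hIoc : Ioc 0 (ι + 1) = insert (ι + 1) (Ioc 0 ι) := by ext; simp; omega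
  have hnot : ι + 1 ∉ S ∩ Ioc 0 ι := by simp
  unfold bdPart
  by_cases h : ι + 1 ∈ S
  · rw [hIoc, inter_insert_of_mem h, card_insert_of_notMem hnot, if_pos h, if_pos h]
    split <;> ring
  · rw [hIoc, inter_insert_of_notMem h, if_neg h, if_neg h]
    split <;> ring

end Construction

section Rigidity

variable {a b k : ℕ}

lemma mod_ne_mod_of_lt (ha : 0 < a) (hab : a < b) (hbk : b ≤ k) : a % k ≠ b % k := by
  rcases hbk.lt_or_eq with h | rfl
  · rw [Nat.mod_eq_of_lt (hab.trans h), Nat.mod_eq_of_lt h]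
    exact hab.ne
  · rw [Nat.mod_eq_of_lt hab, Nat.mod_self]
    exact ha.ne'

lemma bdStep_bdPart_succ (ha : 0 < a) (hab : a < b) (hbk : b ≤ k) (S : Finset ℕ) (ι : ℕ) :
    BDStep a b k (bdPart a b k S (ι + 1)) (bdPart a b k S ι) := by
  have hne := mod_ne_mod_of_lt ha hab hbk
  have hsucc := bdPart_succ (a := a) (b := b) (k := k) S ι
  rw [BDStep, bdPart_mod, bdPart_mod]
  by_cases h1 : ι + 1 ∈ S <;> by_cases h0 : ι ∈ S <;>
    simp only [h1, h0, if_true, if_false] at hsucc ⊢ <;> omega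

lemma eq_of_bdStep {x x' y : ℕ} (hxx' : x % k = x' % k)
    (hx : x % k = a % k ∨ x % k = b % k) (h : BDStep a b k x y) (h' : BDStep a b k x' y) :
    x = x' := by
  wlog hle : x ≤ x' generalizing x x'
  · exact (this hxx'.symm (hxx' ▸ hx) h' h (le_of_not_ge hle)).symm
  have hdvd : k ∣ x' - x := (Nat.modEq_iff_dvd' hle).1 hxx'
  by_contra hne
  obtain ⟨⟨hxy, hxa⟩, -, -⟩ := h
  obtain ⟨-, hx'y, hyb⟩ := h'
  -- both lie in `[y + k, y + 2k]`, so the only alternative is `x = y + k`, `x' = y + 2k`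
  have hxk : x' = x + k := by
    have := Nat.eq_zero_of_dvd_of_lt hdvd
    omega
  have hx_eq : x = y + k := by omega
  have hxb : x % k = b % k := hx.resolve_left fun hxa' => by have := hxa hxa'; omega
  rw [hx_eq, Nat.add_mod_right] at hxb
  have := hyb hxb
  omega

lemma eq_of_map_mod_eq (hne : a % k ≠ b % k) {l l' : List ℕ}
    (hmod : l.map (· % k) = l'.map (· % k)) (hcls : ∀ x ∈ l, x % k = a % k ∨ x % k = b % k)
    (hl : l.IsChain (BDStep a b k)) (hl' : l'.IsChain (BDStep a b k))
    (hlast : l.getLast? = some a ∨ l.getLast? = some b)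
    (hlast' : l'.getLast? = some a ∨ l'.getLast? = some b) : l = l' := by
  induction l generalizing l' with
  | nil => exact (List.map_eq_nil_iff.1 hmod.symm).symm
  | cons x t ih =>
    obtain _ | ⟨x', t'⟩ := l'
    · simp at hmod
    simp only [List.map_cons, List.cons.injEq] at hmod
    obtain ⟨hxx', htt'⟩ := hmod
    obtain _ | ⟨y, s⟩ := t
    · obtain rfl : t' = [] := List.map_eq_nil_iff.1 htt'.symm
      simp only [List.getLast?_singleton, Option.some.injEq] at hlast hlast'
      rcases hlast with rfl | rfl <;> rcases hlast' with rfl | rfl <;> simp_all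
    obtain _ | ⟨y', s'⟩ := t'
    · simp at htt'
    have htail := ih htt' (fun z hz => hcls z (List.mem_cons_of_mem x hz)) hl.tail hl'.tail
      (by rwa [List.getLast?_cons_cons] at hlast) (by rwa [List.getLast?_cons_cons] at hlast')
    obtain ⟨rfl, rfl⟩ := List.cons.inj htail
    rw [eq_of_bdStep hxx' (hcls x List.mem_cons_self) (List.isChain_cons_cons.1 hl).1
      (List.isChain_cons_cons.1 hl').1]

end Rigidity

section Bijection

variable {a b k m : ℕ}

lemma isChain_bdList (ha : 0 < a) (hab : a < b) (hbk : b ≤ k) (m : ℕ) (S : Finset ℕ) :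
    (bdList a b k m S).IsChain (BDStep a b k) := by
  rw [bdList, List.isChain_reverse, List.isChain_map, List.isChain_range]
  exact fun ι _ => bdStep_bdPart_succ ha hab hbk S ι

lemma memBD'_bdList (ha : 0 < a) (hab : a < b) (hbk : b ≤ k) (hm : 0 < m) (S : Finset ℕ) :
    memBD' a b k m (bdList a b k m S) := by
  have hchain := isChain_bdList ha hab hbk m S
  refine ⟨List.isChain_iff_pairwise.1 (hchain.imp fun x y h => by unfold BDStep at h; omega),
    by simp [bdList], fun x hx => ?_, ?_, hchain⟩
  · obtain ⟨ι, -, rfl⟩ := List.mem_map.1 (List.mem_reverse.1 hx)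
    refine ⟨by unfold bdPart; split <;> omega, ?_⟩
    rw [bdPart_mod]
    split <;> simp
  · obtain ⟨n, rfl⟩ := Nat.exists_eq_add_of_lt hm
    rw [bdList, List.getLast?_reverse, List.range_succ_eq_map, List.map_cons, List.head?_cons,
      bdPart_zero]
    split <;> simp

lemma exists_bdList_eq (ha : 0 < a) (hab : a < b) (hbk : b ≤ k) {l : List ℕ}
    (hl : memBD' a b k m l) : ∃ S ⊆ range m, bdList a b k m S = l := by
  obtain ⟨-, hlen, hcls, hlast, hchain⟩ := hl
  have hm : 0 < m := by
    rcases hlast with h | h <;>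
    · rw [← hlen]
      exact List.length_pos_of_ne_nil (by rintro rfl; simp at h)
  set S := (range m).filter fun ι => l.reverse.getD ι 0 % k = a % k
  have hS := memBD'_bdList ha hab hbk hm S
  have hmod : (bdList a b k m S).map (· % k) = l.map (· % k) := by
    apply List.reverse_injective
    rw [bdList, ← List.map_reverse, List.reverse_reverse, ← List.map_reverse]
    refine List.ext_getElem (by simp [hlen]) fun i h1 _ => ?_
    have hi : i < m := by simpa using h1
    have hi' : i < l.reverse.length := by simpa [hlen] using hi
    have hmem : l.reverse[i] ∈ l := List.mem_reverse.1 (List.getElem_mem hi')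
    simp only [List.getElem_map, List.getElem_range, bdPart_mod, S, mem_filter, mem_range,
      List.getD_eq_getElem _ _ hi', hi, true_and]
    split_ifs with ha'
    · exact ha'.symm
    · exact ((hcls _ hmem).2.resolve_left ha').symm
  exact ⟨S, filter_subset _ _, eq_of_map_mod_eq (mod_ne_mod_of_lt ha hab hbk) hmod
    (fun x hx => (hS.2.2.1 x hx).2) hS.2.2.2.2 hchain hS.2.2.2.1 hlast⟩

lemma mem_iff_bdPart_mod (hne : a % k ≠ b % k) (S : Finset ℕ) (ι : ℕ) :
    ι ∈ S ↔ bdPart a b k S ι % k = a % k := by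
  rw [bdPart_mod]
  split_ifs with h <;> simp [h, hne.symm]

lemma bdList_injOn (hne : a % k ≠ b % k) (m : ℕ) :
    Set.InjOn (bdList a b k m) ((range m).powerset : Set (Finset ℕ)) := by
  intro S hS T hT hST
  have hpart : ∀ ι < m, bdPart a b k S ι = bdPart a b k T ι := by
    simpa [bdList] using hST
  ext ι
  by_cases hι : ι < m
  · rw [mem_iff_bdPart_mod hne, hpart ι hι, ← mem_iff_bdPart_mod hne]
  · exact iff_of_false (fun h => hι (mem_range.1 (mem_powerset.1 hS h)))
      (fun h => hι (mem_range.1 (mem_powerset.1 hT h)))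

lemma setOf_memBD'_eq (ha : 0 < a) (hab : a < b) (hbk : b ≤ k) (hm : 0 < m) :
    {l | memBD' a b k m l} = (range m).powerset.image (bdList a b k m) := by
  ext l
  simp only [Set.mem_ofPred_eq, coe_image, Set.mem_image, mem_coe, mem_powerset]
  exact ⟨exists_bdList_eq ha hab hbk, fun ⟨S, _, hS⟩ => hS ▸ memBD'_bdList ha hab hbk hm S⟩

end Bijection

section Weight

variable {a b k m : ℕ}

lemma lcount_bdList (c : ℕ) (S : Finset ℕ) :
    lcount k c (bdList a b k m S) = #{ι ∈ range m | bdPart a b k S ι % k = c % k} := by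
  rw [lcount, bdList, List.filter_reverse, List.length_reverse, List.filter_map, List.length_map]
  rfl

lemma lcount_bdList_left (hne : a % k ≠ b % k) {S : Finset ℕ} (hS : S ⊆ range m) :
    lcount k a (bdList a b k m S) = #S := by
  rw [lcount_bdList]
  congr 1
  ext ι
  rw [mem_filter, ← mem_iff_bdPart_mod hne]
  exact ⟨And.right, fun h => ⟨hS h, h⟩⟩

lemma lcount_bdList_right (hne : a % k ≠ b % k) {S : Finset ℕ} (hS : S ⊆ range m) :
    lcount k b (bdList a b k m S) = m - #S := by
  have hb : ∀ ι, bdPart a b k S ι % k = b % k ↔ ι ∉ S := fun ι => by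
    rw [mem_iff_bdPart_mod hne, bdPart_mod]
    split_ifs <;> simp [hne, hne.symm]
  rw [lcount_bdList, filter_congr fun ι _ => hb ι, filter_notMem_eq_sdiff,
    card_sdiff_of_subset hS, card_range]

lemma card_filter_range_mem_Ioc {j : ℕ} (hj : j < m) :
    #{ι ∈ range m | j ∈ Ioc 0 ι} = reflect m j := by
  unfold reflect
  split_ifs with h
  · obtain rfl : j = 0 := by omega
    simp
  · rw [show {ι ∈ range m | j ∈ Ioc 0 ι} = Ico j m by ext; simp; omega, Nat.card_Ico]

lemma sum_card_inter_Ioc {S : Finset ℕ} (hS : S ⊆ range m) :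
    ∑ ι ∈ range m, #(S ∩ Ioc 0 ι) = ∑ j ∈ S, reflect m j :=
  calc ∑ ι ∈ range m, #(S ∩ Ioc 0 ι)
      = ∑ ι ∈ range m, ∑ j ∈ S, if j ∈ Ioc 0 ι then 1 else 0 := by
        simp only [← card_filter, filter_mem_eq_inter]
    _ = ∑ j ∈ S, #{ι ∈ range m | j ∈ Ioc 0 ι} := by rw [sum_comm]; simp only [card_filter]
    _ = ∑ j ∈ S, reflect m j :=
        sum_congr rfl fun j hj => card_filter_range_mem_Ioc (mem_range.1 (hS hj))

lemma sum_bdList {S : Finset ℕ} (hS : S ⊆ range m) :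
    (bdList a b k m S).sum
      = a * #S + b * (m - #S) + k * m.choose 2 + k * ∑ j ∈ S, reflect m j := by
  have hres : ∑ ι ∈ range m, (if ι ∈ S then a else b) = a * #S + b * (m - #S) := by
    rw [sum_ite, filter_mem_eq_inter, inter_eq_right.2 hS, filter_notMem_eq_sdiff, sum_const,
      sum_const, card_sdiff_of_subset hS, card_range, smul_eq_mul, smul_eq_mul, mul_comm a,
      mul_comm b]
  rw [bdList, List.sum_reverse,
    show ((List.range m).map (bdPart a b k S)).sum = ∑ ι ∈ range m, bdPart a b k S ι from rfl]
  simp only [bdPart, sum_add_distrib, hres, ← mul_sum, sum_card_inter_Ioc hS]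
  rw [← mul_sum, sum_range_id, Nat.choose_two_right]

lemma weight_bdList (hne : a % k ≠ b % k) {S : Finset ℕ} (hS : S ⊆ range m) (q u v : ℂ) :
    u ^ lcount k a (bdList a b k m S) * v ^ lcount k b (bdList a b k m S)
        * q ^ (bdList a b k m S).sum
      = u ^ #S * v ^ (m - #S) * q ^ (k * m.choose 2 + (m - #S) * b + a * #S)
        * (q ^ k) ^ ∑ j ∈ S, reflect m j := by
  rw [lcount_bdList_left hne hS, lcount_bdList_right hne hS, sum_bdList hS, ← pow_mul,
    mul_assoc _ (q ^ _), ← pow_add]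
  ring_nf

end Weight

/-- Generating function for the partitions in `BD'_{a,b,k}(m)`:
`Σ_{λ ∈ BD'_{a,b,k}(m)} u^{ℓ_a} v^{ℓ_b} q^{|λ|}
  = Σ_{h=0}^{m} u^h v^{m-h} q^{k C(m,2) + k C(h,2) + mb + (a-b)h} [m, h]_k`,
where the exponent `mb + (a-b)h` is written as `(m-h)b + ha ≥ 0`. -/
theorem gen_BD'_m (a b k m : ℕ) (ha : 1 ≤ a) (hab : a < b) (hbk : b ≤ k)
    (hm : 1 ≤ m) (q u v : ℂ) (hq : ‖q‖ < 1) :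
    ∑ᶠ l ∈ {l : List ℕ | memBD' a b k m l},
        u ^ lcount k a l * v ^ lcount k b l * q ^ l.sum
      = ∑ h ∈ Finset.range (m + 1), u ^ h * v ^ (m - h) *
          q ^ (k * Nat.choose m 2 + k * Nat.choose h 2 + (m - h) * b + a * h) *
          gbinom (q ^ k) m h := by
  have hne := mod_ne_mod_of_lt ha hab hbk
  have hQ : ¬ IsOfFinOrder (q ^ k) := fun h => hq.ne (h.of_pow (by omega)).norm_eq_one
  rw [setOf_memBD'_eq ha hab hbk hm, finsum_mem_coe_finset, sum_image (bdList_injOn hne m),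
    sum_powerset, card_range]
  refine sum_congr rfl fun h _ => ?_
  calc _ = ∑ S ∈ powersetCard h (range m), u ^ h * v ^ (m - h)
          * q ^ (k * m.choose 2 + (m - h) * b + a * h) * (q ^ k) ^ ∑ j ∈ S, reflect m j :=
        sum_congr rfl fun S hS => by
          rw [weight_bdList hne (mem_powersetCard.1 hS).1, (mem_powersetCard.1 hS).2]
    _ = _ := by
      rw [← mul_sum, sum_powersetCard_range_pow_sum_reflect hQ, ← pow_mul,
        show k * m.choose 2 + k * h.choose 2 + (m - h) * b + a * h
          = k * m.choose 2 + (m - h) * b + a * h + k * h.choose 2 by ring, pow_add]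
      ring
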